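/- arXiv:1911.06094 — 8 statements merged into one kernel-verified Lean document; each statement's English description precedes it below -/
import Mathlib

section
/- For every integer n ≥ 2 and every real t with 0 < t ≤ 1, one has scal_A(n,t)/(n(n+1)−1) < 1/t². (This is the inequality scal(g_t)/(m−1) < λ^{1,1}(t) = μ₁ + (1/t²−1)φ₁ for the canonical variation g_t on SU(n+1)/Tⁿ, where μ₁ = φ₁ = 1.) -/
/-- Scalar curvature of the canonical variation `g_t` of the normal homogeneous
metric on the full flag manifold `SU(n+1)/Tⁿ`. -/
noncomputable def scalA (n : ℕ) (t : ℝ) : ℝ :=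
  (-2 * n + n ^ 2 * (n + 1) + 4 * n * (n + 1) * t ^ 2 + n * (1 - n) * t ^ 4) /
    (4 * (n + 1) * t ^ 2)

/-- For `n ≥ 2` and `0 < t ≤ 1`, `scal(g_t)/(m-1) < λ^{1,1}(t) = 1/t²`
(here `m = n(n+1)`, `μ₁ = φ₁ = 1`). -/
theorem scalA_div_lt_lambda11 (n : ℕ) (hn : 2 ≤ n) (t : ℝ) (ht0 : 0 < t) (ht1 : t ≤ 1) :
    scalA n t / (n * (n + 1) - 1) < 1 / t ^ 2 := by
  have hN : (2:ℝ) ≤ (n:ℝ) := by exact_mod_cast hn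
  have ht2 : (0:ℝ) < t ^ 2 := by positivity
  have ht2' : t ^ 2 ≤ 1 := by nlinarith
  have hD : (0:ℝ) < (n:ℝ) * ((n:ℝ) + 1) - 1 := by nlinarith
  have key : (-2 * (n:ℝ) + (n:ℝ) ^ 2 * ((n:ℝ) + 1) + 4 * (n:ℝ) * ((n:ℝ) + 1) * t ^ 2 +
      (n:ℝ) * (1 - (n:ℝ)) * t ^ 4) < 4 * ((n:ℝ) + 1) * ((n:ℝ) * ((n:ℝ) + 1) - 1) := by
    nlinarith [mul_pos (mul_pos ht2 ht2) (show (0:ℝ) < (n:ℝ) * ((n:ℝ) - 1) by nlinarith),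
      mul_nonneg (sub_nonneg.2 ht2') (show (0:ℝ) ≤ 4 * (n:ℝ) * ((n:ℝ) + 1) by nlinarith)]
  unfold scalA
  rw [div_div, div_lt_div_iff₀ (by positivity) ht2]
  nlinarith [mul_lt_mul_of_pos_right key ht2]
end

section
/- For every integer n ≥ 2, the number b_A(n) satisfies 0 < b_A(n) < 1, and for every real t with 0 < t ≤ 1 one has scal_A(n,t)/(n(n+1)−1) < 1 if and only if b_A(n) < t. (Consequently the canonical variation g_t on SU(n+1)/Tⁿ is locally rigid on the interval (b_A(n), 1].) -/
/-- The first degeneracy instant of `g_t` on `SU(n+1)/Tⁿ`. -/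
noncomputable def bA (n : ℕ) : ℝ :=
  Real.sqrt (Real.sqrt ((4 * n ^ 4 + 17 * n ^ 3 + 26 * n ^ 2 + 16 * n + 4) / n ^ 2)
    - 2 * (n ^ 2 + 2 * n + 1) / n)

set_option maxHeartbeats 1600000 in
/-- `0 < b_A(n) < 1`, and for `0 < t ≤ 1` one has `scal_A(n,t)/(n(n+1)-1) < 1`
iff `b_A(n) < t`; hence `g_t` is locally rigid on `(b_A(n), 1]`. -/
theorem bA_mem_Ioo_and_scalA_lt_iff (n : ℕ) (hn : 2 ≤ n) :
    (0 < bA n ∧ bA n < 1) ∧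
    ∀ t : ℝ, 0 < t → t ≤ 1 → (scalA n t / (n * (n + 1) - 1) < 1 ↔ bA n < t) := by
  obtain ⟨N, hNdef⟩ : ∃ x : ℝ, x = (n:ℝ) := ⟨_, rfl⟩
  have hN : (2:ℝ) ≤ N := by rw [hNdef]; exact_mod_cast hn
  have hN0 : 0 < N := by linarith
  have hDpos : (0:ℝ) < 4*N^4+17*N^3+26*N^2+16*N+4 := by nlinarith
  obtain ⟨s, hs⟩ : ∃ x : ℝ, x = Real.sqrt (4*N^4+17*N^3+26*N^2+16*N+4) := ⟨_, rfl⟩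
  have hs2 : s^2 = 4*N^4+17*N^3+26*N^2+16*N+4 := by rw [hs]; exact Real.sq_sqrt hDpos.le
  have hs0 : 0 ≤ s := hs ▸ Real.sqrt_nonneg _
  have hslb : 2*(N+1)^2 < s := by nlinarith [hs2, hs0]
  have hsub : s < N + 2*(N+1)^2 := by nlinarith [hs2, hs0]
  obtain ⟨u0, hu0⟩ : ∃ x : ℝ, x = s/N - 2*(N+1)^2/N := ⟨_, rfl⟩
  have hu0pos : 0 < u0 := by
    rw [hu0, div_sub_div_same]
    exact div_pos (by linarith) hN0
  have hu0lt1 : u0 < 1 := by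
    rw [hu0, div_sub_div_same, div_lt_one hN0]
    linarith
  have hroot : N*u0^2 + 4*(N+1)^2*u0 = N*(N+2) := by
    rw [hu0]
    field_simp
    nlinarith [hs2]
  have hbA : bA n = Real.sqrt u0 := by
    have e1 : ((4 * (n:ℝ) ^ 4 + 17 * (n:ℝ) ^ 3 + 26 * (n:ℝ) ^ 2 + 16 * (n:ℝ) + 4 : ℝ)) / (n:ℝ) ^ 2
        = (4*N^4+17*N^3+26*N^2+16*N+4) / N^2 := by rw [hNdef]
    rw [bA, e1, Real.sqrt_div hDpos.le, Real.sqrt_sq hN0.le, ← hs, hu0]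
    congr 1
    rw [hNdef.symm]
    ring
  constructor
  · constructor
    · rw [hbA]; exact Real.sqrt_pos.mpr hu0pos
    · rw [hbA]
      exact (Real.sqrt_lt' one_pos).mpr (by linarith)
  · intro t ht ht1
    have hden1 : (0:ℝ) < N * (N + 1) - 1 := by nlinarith
    have hden2 : (0:ℝ) < 4 * (N + 1) * t ^ 2 := by positivity
    rw [hbA, Real.sqrt_lt' ht, scalA, ← hNdef]
    rw [div_lt_one hden1, div_lt_iff₀ hden2]
    constructor
    · intro h
      by_contra h'
      push_neg at h'
      have h1 : 0 ≤ u0 - t^2 := by linarith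
      have h2 : 0 < u0 + t^2 := by positivity
      have key : N*t^4 + 4*(N+1)^2*t^2 ≤ N*(N+2) := by
        nlinarith [mul_nonneg h1 h2.le, hroot]
      have key2 : 0 ≤ (N-1) * (N*(N+2) - (N*t^4+4*(N+1)^2*t^2)) :=
        mul_nonneg (by linarith) (by linarith)
      nlinarith [key2]
    · intro h
      have h1 : 0 < t^2 - u0 := by linarith
      have h2 : 0 < N*(t^2+u0)+4*(N+1)^2 := by
        nlinarith [mul_pos hN0 (add_pos (pow_pos ht 2) hu0pos), sq_nonneg (N+1)]
      have key : 0 < (N-1) * ((t^2-u0)*(N*(t^2+u0)+4*(N+1)^2)) :=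
        mul_pos (by linarith) (mul_pos h1 h2)
      have hroot2 : (N-1)*(N*u0^2+4*(N+1)^2*u0) = (N-1)*(N*(N+2)) := by rw [hroot]
      nlinarith [key, hroot2]
end

section
/- For every integer n ≥ 2, every real r ≥ 1, and every real t with 0 < t < b_A(n), one has scal_A(n,t)/(n(n+1)−1) < (1/t² − 1)·r. (Hence scal(g_t)/(m−1) never equals an eigenvalue of the form λ^{0,j}(t) = (1/t²−1)φ_j with φ_j ≥ 1 for t in this range.) -/
/-!
`bA n ^ 2` is the positive root of `n s² + 4(n+1)² s - n(n+2)`, which lies below `1/4`, so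
`t < bA n` forces `t < 1/2`. With `s = t²`, the inequality for `r = 1` is, after clearing
denominators, the positivity of a quadratic in `s` that is decreasing on `s ≤ 1/4` and still
positive at `s = 1/4`; the factor `r ≥ 1` only enlarges the positive right-hand side.
-/

theorem bA_le_half (n : ℕ) : bA n ≤ 1 / 2 := by
  rcases Nat.eq_zero_or_pos n with rfl | hn
  · simp [bA]
  have hx : (0 : ℝ) < n := by exact_mod_cast hn
  have hE : (4 * n ^ 4 + 17 * n ^ 3 + 26 * n ^ 2 + 16 * n + 4) / n ^ 2
      ≤ (1 / 4 + 2 * (n ^ 2 + 2 * n + 1) / n : ℝ) ^ 2 := by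
    rw [div_le_iff₀ (by positivity)]
    field_simp
    nlinarith
  have hsqrt := Real.sqrt_le_iff.mpr ⟨by positivity, hE⟩
  exact Real.sqrt_le_iff.mpr ⟨by norm_num, by linarith⟩

theorem scalA_numerator_lt {x s : ℝ} (hx : 1 ≤ x) (hs : s ≤ 1 / 4) :
    -2 * x + x ^ 2 * (x + 1) + 4 * x * (x + 1) * s + x * (1 - x) * s ^ 2
      < 4 * (x + 1) * (x * (x + 1) - 1) * (1 - s) := by
  have hquad : 0 ≤ x * (x - 1) * s ^ 2 := by
    have : 0 ≤ x * (x - 1) := mul_nonneg (by linarith) (by linarith)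
    positivity
  have hlin : 0 ≤ 4 * (x + 1) * (x ^ 2 + 2 * x - 1) := by nlinarith
  nlinarith [mul_le_mul_of_nonneg_left hs hlin]

theorem scalA_div_lt {n : ℕ} (hn : 1 ≤ n) {t : ℝ} (ht0 : 0 < t) (ht : t ≤ 1 / 2) :
    scalA n t / (n * (n + 1) - 1) < 1 / t ^ 2 - 1 := by
  have hx : (1 : ℝ) ≤ n := by exact_mod_cast hn
  have hs : t ^ 2 ≤ 1 / 4 := by nlinarith
  have hden : (0 : ℝ) < n * (n + 1) - 1 := by nlinarith
  rw [div_lt_iff₀ hden, scalA, div_lt_iff₀ (by positivity), show t ^ 4 = (t ^ 2) ^ 2 by ring]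
  calc _ < 4 * (n + 1) * (n * (n + 1) - 1) * (1 - t ^ 2) := scalA_numerator_lt hx hs
    _ = _ := by field_simp

/-- For `n ≥ 2`, `r ≥ 1` and `0 < t < b_A(n)`,
`scal_A(n,t)/(n(n+1)-1) < (1/t² - 1)·r`; hence `scal(g_t)/(m-1)` never equals
an eigenvalue `λ^{0,j}(t) = (1/t²-1)φ_j` with `φ_j ≥ 1` in this range. -/
theorem scalA_div_lt_vertical (n : ℕ) (hn : 2 ≤ n) (r : ℝ) (hr : 1 ≤ r)
    (t : ℝ) (ht0 : 0 < t) (htb : t < bA n) :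
    scalA n t / (n * (n + 1) - 1) < (1 / t ^ 2 - 1) * r := by
  have ht : t < 1 / 2 := htb.trans_le (bA_le_half n)
  have hpos : 0 < 1 / t ^ 2 - 1 := by
    rw [sub_pos, one_lt_div (by positivity)]
    nlinarith
  calc scalA n t / (n * (n + 1) - 1) < 1 / t ^ 2 - 1 := scalA_div_lt (by omega) ht0 ht.le
    _ ≤ (1 / t ^ 2 - 1) * r := le_mul_of_one_le_right hpos.le hr
end

section
/- For every integer n ≥ 2 and every integer q ≥ 1, the number t_q := sqrt( sqrt(f(q)) − g(q) ) satisfies 0 < t_q ≤ b_A(n), t_1 = b_A(n), and scal_A(n, t_q)/(n(n+1)−1) = q(q+n)/(n+1); that is, t_q is a degeneracy instant of the canonical variation g_t on SU(n+1)/Tⁿ, at which scal(g_t)/(m−1) equals the eigenvalue q(q+n)/(n+1) of the Laplacian of the base ℂPⁿ. -/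
/-- The auxiliary quantity `f(q)` in the formula for the degeneracy instants. -/
noncomputable def fA (n q : ℕ) : ℝ :=
  (1 / (n ^ 2 * (n - 1) ^ 2)) *
    (4 * n ^ 6 * q ^ 2 + n ^ 5 * (8 * q ^ 3 + 8 * q ^ 2 - 8 * q + 1)
      + 4 * n ^ 4 * (q ^ 4 + 4 * q ^ 3 - 3 * q ^ 2 - 4 * q + 1)
      + n ^ 3 * (8 * q ^ 4 - 8 * q ^ 3 - 24 * q ^ 2 + 5)
      + n ^ 2 * (-4 * q ^ 4 - 16 * q ^ 3 + 4 * q ^ 2 + 8 * q + 6)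
      + 8 * n * q ^ 2 * (-q ^ 2 + q + 1) + 4 * q ^ 4)

/-- The auxiliary quantity `g(q)` in the formula for the degeneracy instants. -/
noncomputable def gA (n q : ℕ) : ℝ :=
  2 * (n ^ 3 * q + n ^ 2 * (q ^ 2 + q - 1) + n * (q ^ 2 - q - 1) - q ^ 2) / ((n - 1) * n)

/-- The degeneracy instants `t_q = sqrt(sqrt(f(q)) - g(q))` of `g_t` on `SU(n+1)/Tⁿ`. -/
noncomputable def tA (n q : ℕ) : ℝ :=
  Real.sqrt (Real.sqrt (fA n q) - gA n q)

lemma fA_eq (n q : ℕ) (hn : 2 ≤ n) : fA n q = gA n q ^ 2 + n + 2 := by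
  have hN : (2:ℝ) ≤ (n:ℝ) := by exact_mod_cast hn
  have h0 : (n:ℝ) ≠ 0 := by linarith
  have h1 : (n:ℝ) - 1 ≠ 0 := by linarith
  unfold fA gA
  field_simp
  ring

lemma sA_pos (n q : ℕ) (hn : 2 ≤ n) : 0 < Real.sqrt (fA n q) - gA n q := by
  have hN : (2:ℝ) ≤ (n:ℝ) := by exact_mod_cast hn
  have hf : fA n q = gA n q ^ 2 + n + 2 := fA_eq n q hn
  have h1 : |gA n q| < Real.sqrt (fA n q) := by
    rw [← Real.sqrt_sq_eq_abs, hf]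
    apply Real.sqrt_lt_sqrt (sq_nonneg _)
    linarith
  have := abs_lt.mp h1
  linarith [this.2, le_abs_self (gA n q)]

lemma sA_key (n q : ℕ) (hn : 2 ≤ n) :
    (Real.sqrt (fA n q) - gA n q) ^ 2 + 2 * gA n q * (Real.sqrt (fA n q) - gA n q)
      = n + 2 := by
  have hf : fA n q = gA n q ^ 2 + n + 2 := fA_eq n q hn
  have hnn : 0 ≤ fA n q := by
    rw [hf]
    have hN : (2:ℝ) ≤ (n:ℝ) := by exact_mod_cast hn
    nlinarith [sq_nonneg (gA n q)]
  have h2 : Real.sqrt (fA n q) ^ 2 = fA n q := Real.sq_sqrt hnn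
  nlinarith [h2, hf]

lemma main_alg (N Q s : ℝ) (hN : 2 ≤ N) (hs : 0 < s)
    (keyG : (N - 1) * N * s ^ 2
        + 4 * s * (N ^ 3 * Q + N ^ 2 * (Q ^ 2 + Q - 1) + N * (Q ^ 2 - Q - 1) - Q ^ 2)
      = (N + 2) * (N - 1) * N) :
    (-2 * N + N ^ 2 * (N + 1) + 4 * N * (N + 1) * s + N * (1 - N) * s ^ 2) /
        (4 * (N + 1) * s) / (N * (N + 1) - 1)
      = Q * (Q + N) / (N + 1) := by
  have h1 : (4 * (N + 1) * s) * (N * (N + 1) - 1) ≠ 0 := by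
    have h3 : (0:ℝ) < N * (N + 1) - 1 := by nlinarith
    have h4 : (0:ℝ) < N + 1 := by linarith
    positivity
  have h2 : (N:ℝ) + 1 ≠ 0 := by linarith
  rw [div_div, div_eq_div_iff h1 h2]
  linear_combination (-(N + 1)) * keyG

/-- For `n ≥ 2` and `q ≥ 1`, `t_q = sqrt(sqrt(f(q)) - g(q))` satisfies
`0 < t_q ≤ b_A(n)`, `t_1 = b_A(n)`, and `scal_A(n,t_q)/(n(n+1)-1) = q(q+n)/(n+1)`:
`t_q` is a degeneracy instant at which `scal(g_t)/(m-1)` equals the eigenvalue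
`q(q+n)/(n+1)` of the Laplacian of the base `ℂPⁿ`. -/
theorem tA_degeneracy (n : ℕ) (hn : 2 ≤ n) (q : ℕ) (hq : 1 ≤ q) :
    (0 < tA n q ∧ tA n q ≤ bA n) ∧ tA n 1 = bA n ∧
    scalA n (tA n q) / (n * (n + 1) - 1) = q * (q + n) / (n + 1) := by
  have hN : (2:ℝ) ≤ (n:ℝ) := by exact_mod_cast hn
  have hQ : (1:ℝ) ≤ (q:ℝ) := by exact_mod_cast hq
  have h0 : (n:ℝ) ≠ 0 := by linarith
  have h1 : (n:ℝ) - 1 ≠ 0 := by linarith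
  -- t_1 = bA
  have hf1 : fA n 1 = (4 * n ^ 4 + 17 * n ^ 3 + 26 * n ^ 2 + 16 * n + 4) / n ^ 2 := by
    unfold fA; push_cast; field_simp; ring
  have hg1 : gA n 1 = 2 * (n ^ 2 + 2 * n + 1) / n := by
    unfold gA; push_cast; field_simp; ring
  have ht1 : tA n 1 = bA n := by
    unfold tA bA; rw [hf1, hg1]
  -- positivity
  have hs := sA_pos n q hn
  have htpos : 0 < tA n q := Real.sqrt_pos.mpr hs
  -- t_q ≤ bA = t_1
  have hle : tA n q ≤ bA n := by
    rw [← ht1]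
    unfold tA
    apply Real.sqrt_le_sqrt
    have hs1 := sA_pos n 1 hn
    have k₂ := sA_key n q hn
    have k₁ := sA_key n 1 hn
    have hgle : gA n 1 ≤ gA n q := by
      unfold gA
      have hd : (0:ℝ) < ((n:ℝ) - 1) * n := by nlinarith
      rw [div_le_div_iff₀ hd hd]
      push_cast
      have hbr : (0:ℝ) ≤ ((q:ℝ) - 1) *
          ((n:ℝ) ^ 3 + (n:ℝ) ^ 2 * ((q:ℝ) + 2) + (n:ℝ) * (q:ℝ) - (q:ℝ) - 1) := by
        apply mul_nonneg (by linarith)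
        nlinarith
      nlinarith [mul_nonneg hbr hd.le]
    by_contra hcon
    push_neg at hcon
    have h2g : 0 < (Real.sqrt (fA n q) - gA n q) + 2 * gA n q := by
      by_contra h2
      push_neg at h2
      nlinarith [mul_nonpos_of_nonneg_of_nonpos hs.le h2]
    nlinarith [mul_pos (sub_pos.mpr hcon) (by linarith : (0:ℝ) <
        (Real.sqrt (fA n q) - gA n q) + (Real.sqrt (fA n 1) - gA n 1) + 2 * gA n q),
      mul_nonneg hs1.le (sub_nonneg.mpr hgle)]
  -- main equation
  have ht2 : (tA n q) ^ 2 = Real.sqrt (fA n q) - gA n q := Real.sq_sqrt hs.le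
  have key := sA_key n q hn
  have hG : gA n q * ((n - 1) * n)
      = 2 * (n ^ 3 * q + n ^ 2 * (q ^ 2 + q - 1) + n * (q ^ 2 - q - 1) - q ^ 2) := by
    unfold gA; field_simp
  have keyG : ((n:ℝ) - 1) * n * (Real.sqrt (fA n q) - gA n q) ^ 2
        + 4 * (Real.sqrt (fA n q) - gA n q) *
          ((n:ℝ) ^ 3 * q + (n:ℝ) ^ 2 * ((q:ℝ) ^ 2 + q - 1)
            + (n:ℝ) * ((q:ℝ) ^ 2 - q - 1) - (q:ℝ) ^ 2)
      = ((n:ℝ) + 2) * ((n:ℝ) - 1) * n := by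
    linear_combination (((n:ℝ) - 1) * n) * key - 2 * (Real.sqrt (fA n q) - gA n q) * hG
  have hmain : scalA n (tA n q) / (n * (n + 1) - 1) = q * (q + n) / (n + 1) := by
    unfold scalA
    rw [show (tA n q) ^ 4 = ((tA n q) ^ 2) ^ 2 by ring, ht2]
    exact main_alg n q (Real.sqrt (fA n q) - gA n q) hN hs keyG
  exact ⟨⟨htpos, hle⟩, ht1, hmain⟩
end

section
/- For every integer n ≥ 2, the sequence q ↦ t_q of degeneracy instants of the canonical variation on SU(n+1)/Tⁿ, where t_q is the unique t ∈ (0, b_A(n)] with scal_A(n,t)/(n(n+1)−1) = q(q+n)/(n+1), is strictly decreasing in q and tends to 0 as q → ∞. -/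
/-- For `n ≥ 2`, the sequence `q ↦ t_q` of degeneracy instants of the canonical
variation on `SU(n+1)/Tⁿ`, where `t_q ∈ (0, b_A(n)]` satisfies
`scal_A(n,t_q)/(n(n+1)-1) = q(q+n)/(n+1)`, is strictly decreasing in `q ≥ 1`
and tends to `0` as `q → ∞`. -/
theorem tA_strictAnti_tendsto_zero (n : ℕ) (hn : 2 ≤ n) (t : ℕ → ℝ)
    (ht : ∀ q : ℕ, 1 ≤ q → (0 < t q ∧ t q ≤ bA n) ∧
      scalA n (t q) / (n * (n + 1) - 1) = q * (q + n) / (n + 1)) :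
    (∀ q q' : ℕ, 1 ≤ q → q < q' → t q' < t q) ∧
    Filter.Tendsto t Filter.atTop (nhds 0) := by
  have hn' : (2:ℝ) ≤ (n:ℝ) := by exact_mod_cast hn
  have hn1 : (0:ℝ) < (n:ℝ) + 1 := by linarith
  have hD : (0:ℝ) < (n:ℝ) * ((n:ℝ) + 1) - 1 := by nlinarith
  have anti : ∀ a b : ℝ, 0 < a → a < b → scalA n b < scalA n a := by
    intro a b ha hab
    have hb : (0:ℝ) < b := ha.trans hab
    unfold scalA
    rw [div_lt_div_iff₀ (by positivity) (by positivity)]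
    have h1 : (0:ℝ) < b ^ 2 - a ^ 2 := by nlinarith
    have h2 : (0:ℝ) < ((n:ℝ) ^ 2 * ((n:ℝ) + 1) - 2 * n) + n * (n - 1) * a ^ 2 * b ^ 2 := by
      nlinarith [mul_nonneg (mul_nonneg (by nlinarith : (0:ℝ) ≤ (n:ℝ)*((n:ℝ)-1)) (sq_nonneg a)) (sq_nonneg b), sq_nonneg ((n:ℝ)-2)]
    nlinarith [mul_pos hn1 (mul_pos h1 h2)]
  have key : ∀ q : ℕ, 1 ≤ q →
      scalA n (t q) = ((n:ℝ) * ((n:ℝ) + 1) - 1) * ((q:ℝ) * ((q:ℝ) + n) / ((n:ℝ) + 1)) := by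
    intro q hq
    have h := (ht q hq).2
    have h' := (div_eq_iff hD.ne').mp h
    rw [h']; ring
  constructor
  · intro q q' hq hqq'
    have hq' : 1 ≤ q' := hq.trans hqq'.le
    have hpos := (ht q hq).1.1
    have hpos' := (ht q' hq').1.1
    have hqq : (q:ℝ) < (q':ℝ) := by exact_mod_cast hqq'
    have h0 : (0:ℝ) ≤ (q:ℝ) := Nat.cast_nonneg q
    have h0n : (0:ℝ) ≤ (n:ℝ) := Nat.cast_nonneg n
    have hX : (q:ℝ) * ((q:ℝ) + n) < (q':ℝ) * ((q':ℝ) + n) := by nlinarith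
    have hlt : scalA n (t q) < scalA n (t q') := by
      rw [key q hq, key q' hq']
      exact mul_lt_mul_of_pos_left (by gcongr) hD
    by_contra hc
    push_neg at hc
    rcases hc.lt_or_eq with h | h
    · exact absurd (anti _ _ hpos h) (by linarith)
    · rw [h] at hlt; exact lt_irrefl _ hlt
  · rw [Metric.tendsto_atTop]
    intro ε hε
    obtain ⟨N, hN⟩ := exists_nat_gt (scalA n ε * ((n:ℝ) + 1) / ((n:ℝ) * ((n:ℝ) + 1) - 1))
    refine ⟨N + 1, fun q hq => ?_⟩
    have hq1 : 1 ≤ q := le_trans (Nat.le_add_left 1 N) hq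
    have hpos := (ht q hq1).1.1
    have hqN : (N:ℝ) < (q:ℝ) := by
      exact_mod_cast Nat.lt_of_lt_of_le (Nat.lt_succ_self N) hq
    have h0n : (0:ℝ) ≤ (n:ℝ) := Nat.cast_nonneg n
    have hq0 : (1:ℝ) ≤ (q:ℝ) := by exact_mod_cast hq1
    have h2 : (q:ℝ) ≤ (q:ℝ) * ((q:ℝ) + n) := by nlinarith
    have h1 : scalA n ε * ((n:ℝ) + 1) / ((n:ℝ) * ((n:ℝ) + 1) - 1) < (q:ℝ) * ((q:ℝ) + n) := by
      linarith [hN.trans hqN]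
    rw [div_lt_iff₀ hD] at h1
    have hfq : scalA n ε < scalA n (t q) := by
      rw [key q hq1]
      rw [mul_comm, div_mul_eq_mul_div, lt_div_iff₀ hn1]
      linarith
    have htlt : t q < ε := by
      by_contra hc
      push_neg at hc
      rcases hc.lt_or_eq with h | h
      · exact absurd (anti ε (t q) hε h) (by linarith)
      · rw [← h] at hfq; exact lt_irrefl _ hfq
    rw [Real.dist_eq, sub_zero, abs_of_pos hpos]
    exact htlt
end

section
/- For every integer n ≥ 2, the function t ↦ scal_A(n,t)/(n(n+1)−1) is strictly decreasing on the interval (0,1], and it tends to +∞ as t → 0⁺. -/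
lemma scalA_anti (n : ℕ) (hn : 2 ≤ n) {s t : ℝ} (hs : 0 < s) (hst : s < t) (ht1 : t ≤ 1) :
    scalA n t < scalA n s := by
  have hN : (2:ℝ) ≤ (n:ℝ) := by exact_mod_cast hn
  have ht : 0 < t := hs.trans hst
  unfold scalA
  rw [div_lt_div_iff₀ (by positivity) (by positivity)]
  set N : ℝ := (n:ℝ)
  have h1 : s ^ 2 < t ^ 2 := by nlinarith
  have h2a : s ^ 2 ≤ 1 := by nlinarith
  have h2b : t ^ 2 ≤ 1 := by nlinarith
  have h2 : s ^ 2 * t ^ 2 ≤ 1 := mul_le_one₀ h2a (sq_nonneg t) h2b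
  have h3 : 0 < N ^ 3 + N ^ 2 - 2 * N + N * (N - 1) * (s ^ 2 * t ^ 2) := by
    nlinarith [mul_nonneg (show (0:ℝ) ≤ N * (N - 1) by nlinarith) (mul_nonneg (sq_nonneg s) (sq_nonneg t))]
  nlinarith [mul_pos (show (0:ℝ) < 4 * (N + 1) by nlinarith) (mul_pos (sub_pos.2 h1) h3)]

/-- For `n ≥ 2`, the function `t ↦ scal_A(n,t)/(n(n+1)-1)` is strictly decreasing
on `(0,1]` and tends to `+∞` as `t → 0⁺`. -/
theorem scalA_strictAntiOn_tendsto_atTop (n : ℕ) (hn : 2 ≤ n) :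
    StrictAntiOn (fun t : ℝ => scalA n t / (n * (n + 1) - 1)) (Set.Ioc 0 1) ∧
    Filter.Tendsto (fun t : ℝ => scalA n t / (n * (n + 1) - 1))
      (nhdsWithin 0 (Set.Ioi 0)) Filter.atTop := by
  have hN : (2:ℝ) ≤ (n:ℝ) := by exact_mod_cast hn
  have hd : (0:ℝ) < (n:ℝ) * ((n:ℝ) + 1) - 1 := by nlinarith
  constructor
  · intro s hs t ht hst
    exact div_lt_div_of_pos_right (scalA_anti n hn hs.1 hst ht.2) hd
  · apply Filter.Tendsto.atTop_div_const hd
    have hnum : Filter.Tendsto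
        (fun t : ℝ => -2 * (n:ℝ) + (n:ℝ) ^ 2 * ((n:ℝ) + 1) + 4 * n * (n + 1) * t ^ 2 +
          (n:ℝ) * (1 - n) * t ^ 4)
        (nhdsWithin 0 (Set.Ioi 0)) (nhds (-2 * (n:ℝ) + (n:ℝ) ^ 2 * ((n:ℝ) + 1))) := by
      have hc : Filter.Tendsto
          (fun t : ℝ => -2 * (n:ℝ) + (n:ℝ) ^ 2 * ((n:ℝ) + 1) + 4 * n * (n + 1) * t ^ 2 +
            (n:ℝ) * (1 - n) * t ^ 4) (nhds 0)
          (nhds (-2 * (n:ℝ) + (n:ℝ) ^ 2 * ((n:ℝ) + 1))) := by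
        have := (by continuity : Continuous (fun t : ℝ => -2 * (n:ℝ) + (n:ℝ) ^ 2 * ((n:ℝ) + 1)
          + 4 * n * (n + 1) * t ^ 2 + (n:ℝ) * (1 - n) * t ^ 4)).tendsto 0
        simpa using this
      exact hc.mono_left nhdsWithin_le_nhds
    have hden : Filter.Tendsto (fun t : ℝ => 4 * ((n:ℝ) + 1) * t ^ 2)
        (nhdsWithin 0 (Set.Ioi 0)) (nhdsWithin 0 (Set.Ioi 0)) := by
      apply tendsto_nhdsWithin_of_tendsto_nhds_of_eventually_within
      · have := (by continuity : Continuous (fun t : ℝ => 4 * ((n:ℝ) + 1) * t ^ 2)).tendsto 0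
        simpa using this.mono_left nhdsWithin_le_nhds
      · filter_upwards [self_mem_nhdsWithin] with t ht
        have : (0:ℝ) < t := ht
        have : (0:ℝ) < 4 * ((n:ℝ) + 1) * t ^ 2 := by positivity
        exact this
    have hinv := hden.inv_tendsto_nhdsGT_zero
    have hC : (0:ℝ) < -2 * (n:ℝ) + (n:ℝ) ^ 2 * ((n:ℝ) + 1) := by nlinarith
    have := (Filter.Tendsto.pos_mul_atTop hC hnum hinv)
    refine this.congr (fun t => ?_)
    simp [scalA, div_eq_mul_inv, Pi.inv_apply]
end

section
/- Let n ≥ 1 be an integer. For every tuple of positive integers (p₁, …, p_n) satisfying 2p₁ − p₂ ≥ 0, −p_{i−1} + 2p_i − p_{i+1} ≥ 0 for 2 ≤ i ≤ n−1, and −p_{n−1} + 2p_n ≥ 0, one has (1/(n+1))·( Σ_{i=1}^n p_i² − Σ_{i=1}^{n−1} p_i p_{i+1} + Σ_{i=1}^n p_i ) ≥ 1, and equality holds for p₁ = … = p_n = 1. (Hence the first positive eigenvalue of the Laplacian of the full flag manifold SU(n+1)/Tⁿ with the normal metric is μ₁ = 1.) -/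
open Finset

private lemma sq_identity (p : ℕ → ℝ) (m : ℕ) :
    2 * (∑ i ∈ Finset.Icc 1 (m + 1), p i ^ 2
        - ∑ i ∈ Finset.Icc 1 m, p i * p (i + 1))
      = p 1 ^ 2 + p (m + 1) ^ 2 + ∑ i ∈ Finset.Icc 1 m, (p i - p (i + 1)) ^ 2 := by
  induction m with
  | zero => simp; ring
  | succ m ih =>
      rw [Finset.sum_Icc_succ_top (f := fun i => p i ^ 2) (by omega : 1 ≤ m + 1 + 1),
          Finset.sum_Icc_succ_top (f := fun i => p i * p (i + 1)) (by omega : 1 ≤ m + 1),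
          Finset.sum_Icc_succ_top (f := fun i => (p i - p (i + 1)) ^ 2) (by omega : 1 ≤ m + 1)]
      linear_combination ih

/-- Yamaguchi's eigenvalue `μ(P)` for the full flag manifold `SU(n+1)/Tⁿ` with
the normal metric: for every dominant tuple of positive integers `p₁, …, p_n`
(i.e. `2p₁ - p₂ ≥ 0`, `-p_{i-1} + 2p_i - p_{i+1} ≥ 0` for `2 ≤ i ≤ n-1`, and
`-p_{n-1} + 2p_n ≥ 0`) one has
`(1/(n+1))·(Σ p_i² - Σ p_i p_{i+1} + Σ p_i) ≥ 1`, with equality for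
`p₁ = ⋯ = p_n = 1`.  Hence the first positive eigenvalue is `μ₁ = 1`. -/
theorem SU_first_eigenvalue (n : ℕ) (hn : 1 ≤ n) :
    (∀ p : ℕ → ℤ, (∀ i, 1 ≤ i → i ≤ n → 1 ≤ p i) →
      (∀ i, 1 ≤ i → i ≤ n →
        0 ≤ 2 * p i - (if i = 1 then 0 else p (i - 1)) - (if i = n then 0 else p (i + 1))) →
      1 ≤ (1 / ((n : ℝ) + 1)) *
        (∑ i ∈ Finset.Icc 1 n, (p i : ℝ) ^ 2
          - ∑ i ∈ Finset.Icc 1 (n - 1), (p i : ℝ) * (p (i + 1) : ℝ)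
          + ∑ i ∈ Finset.Icc 1 n, (p i : ℝ))) ∧
    (1 / ((n : ℝ) + 1)) *
        (∑ _i ∈ Finset.Icc 1 n, (1 : ℝ) ^ 2
          - ∑ _i ∈ Finset.Icc 1 (n - 1), (1 : ℝ) * 1
          + ∑ _i ∈ Finset.Icc 1 n, (1 : ℝ)) = 1 := by
  obtain ⟨m, rfl⟩ : ∃ m, n = m + 1 := ⟨n - 1, by omega⟩
  have hnpos : (0 : ℝ) < ((m + 1 : ℕ) : ℝ) + 1 := by positivity
  have hsimp : (m + 1 - 1 : ℕ) = m := by omega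
  constructor
  · intro p hp _
    have hq1 : ∀ i, 1 ≤ i → i ≤ m + 1 → (1 : ℝ) ≤ (p i : ℝ) := by
      intro i h1 h2; exact_mod_cast hp i h1 h2
    have hid := sq_identity (fun i => (p i : ℝ)) m
    have hssum : (0 : ℝ) ≤ ∑ i ∈ Finset.Icc 1 m, ((p i : ℝ) - (p (i + 1) : ℝ)) ^ 2 :=
      Finset.sum_nonneg fun i _ => sq_nonneg _
    have h1 : (1 : ℝ) ≤ (p 1 : ℝ) := hq1 1 le_rfl (by omega)
    have hlast : (1 : ℝ) ≤ (p (m + 1) : ℝ) := hq1 (m + 1) (by omega) le_rfl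
    have hQ : (1 : ℝ) ≤ ∑ i ∈ Finset.Icc 1 (m + 1), (p i : ℝ) ^ 2
        - ∑ i ∈ Finset.Icc 1 m, (p i : ℝ) * (p (i + 1) : ℝ) := by
      nlinarith
    have hS : ((m : ℝ) + 1) ≤ ∑ i ∈ Finset.Icc 1 (m + 1), (p i : ℝ) := by
      have := Finset.sum_le_sum (f := fun _ : ℕ => (1 : ℝ)) (g := fun i => (p i : ℝ))
        (s := Finset.Icc 1 (m + 1)) (fun i hi => by
          rw [Finset.mem_Icc] at hi; exact hq1 i hi.1 hi.2)
      simpa using this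
    rw [hsimp, one_div, mul_comm, ← div_eq_mul_inv, le_div_iff₀ hnpos, one_mul]
    push_cast
    linarith
  · rw [hsimp]
    simp only [one_pow, mul_one, Finset.sum_const, Nat.card_Icc, smul_eq_mul, mul_one]
    have h1 : (m + 1 + 1 - 1 : ℕ) = m + 1 := by omega
    have h2 : (m + 1 - 1 : ℕ) = m := by omega
    rw [h1, h2]
    push_cast
    field_simp
    ring
end

section
/- Let n ≥ 2 be an integer. For every tuple of positive integers (p₁, …, p_n) satisfying 2p₁ − p₂ ≥ 0, −p_{i−1} + 2p_i − p_{i+1} ≥ 0 for 2 ≤ i ≤ n−1, and −p_{n−1} + p_n ≥ 0, one has (1/(4n−2))·( 2Σ_{i=1}^{n−1} p_i² + p_n² − 2Σ_{i=1}^{n−1} p_i p_{i+1} + 2Σ_{i=1}^{n−1} p_i + p_n ) ≥ n/(2n−1), and equality holds for p₁ = … = p_n = 1. (Hence the first positive eigenvalue of the Laplacian of the full flag manifold SO(2n+1)/Tⁿ with the normal metric is μ₁ = n/(2n−1).) -/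
open Finset

/-!
Completing squares, `2 Σ_{i<n} p_i² + p_n² - 2 Σ_{i<n} p_i p_{i+1} = p_1² + Σ_{i<n} (p_i - p_{i+1})²`,
so for positive integers the quadratic part is at least `p_1² ≥ 1` while the linear part is at least
`2(n-1) + 1`. Hence `(4n-2) μ(P) ≥ 2n`, with equality at `P = (1, …, 1)`.
-/

variable {R : Type*} [CommRing R]

/-- `(4n - 2) μ(P)` in Yamaguchi's formula. -/
def yamaguchiQuadratic (n : ℕ) (p : ℕ → R) : R :=
  2 * ∑ i ∈ Icc 1 (n - 1), p i ^ 2 + p n ^ 2 - 2 * ∑ i ∈ Icc 1 (n - 1), p i * p (i + 1)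
    + 2 * ∑ i ∈ Icc 1 (n - 1), p i + p n

theorem two_sum_sq_add_sq_sub_two_sum_mul_eq (p : ℕ → R) (m : ℕ) :
    2 * ∑ i ∈ Icc 1 m, p i ^ 2 + p (m + 1) ^ 2 - 2 * ∑ i ∈ Icc 1 m, p i * p (i + 1) =
      p 1 ^ 2 + ∑ i ∈ Icc 1 m, (p i - p (i + 1)) ^ 2 := by
  induction m with
  | zero => simp
  | succ m ih =>
    simp only [sum_Icc_succ_top (Nat.le_add_left 1 m)]
    linear_combination ih

theorem yamaguchiQuadratic_succ (p : ℕ → R) (m : ℕ) :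
    yamaguchiQuadratic (m + 1) p =
      p 1 ^ 2 + ∑ i ∈ Icc 1 m, (p i - p (i + 1)) ^ 2 + (2 * ∑ i ∈ Icc 1 m, p i + p (m + 1)) := by
  rw [yamaguchiQuadratic, Nat.add_sub_cancel, ← two_sum_sq_add_sq_sub_two_sum_mul_eq]
  ring

theorem yamaguchiQuadratic_one {n : ℕ} (hn : 1 ≤ n) :
    yamaguchiQuadratic n (fun _ => (1 : R)) = 2 * n := by
  obtain ⟨m, rfl⟩ := Nat.exists_eq_add_of_le' hn
  rw [yamaguchiQuadratic_succ]
  simp only [sub_self, sum_const, Nat.card_Icc, nsmul_eq_mul]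
  push_cast
  ring

variable [LinearOrder R] [IsStrictOrderedRing R]

theorem two_mul_le_yamaguchiQuadratic {n : ℕ} (hn : 1 ≤ n) {p : ℕ → R}
    (hp : ∀ i, 1 ≤ i → i ≤ n → 1 ≤ p i) : 2 * (n : R) ≤ yamaguchiQuadratic n p := by
  obtain ⟨m, rfl⟩ := Nat.exists_eq_add_of_le' hn
  have hp_first : 1 ≤ p 1 ^ 2 := one_le_pow₀ (hp 1 le_rfl hn)
  have hsq : 0 ≤ ∑ i ∈ Icc 1 m, (p i - p (i + 1)) ^ 2 := sum_nonneg fun i _ => sq_nonneg _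
  have hsum : (m : R) ≤ ∑ i ∈ Icc 1 m, p i := by
    simpa using card_nsmul_le_sum (Icc 1 m) p 1 fun i hi => by
      obtain ⟨h1, h2⟩ := mem_Icc.mp hi
      exact hp i h1 (by omega)
  have hp_last : 1 ≤ p (m + 1) := hp (m + 1) (by omega) le_rfl
  rw [yamaguchiQuadratic_succ]
  push_cast
  linarith

/-- Yamaguchi's eigenvalue `μ(P)` for the full flag manifold `SO(2n+1)/Tⁿ` with
the normal metric: for every dominant tuple of positive integers `p₁, …, p_n`
(i.e. `2p₁ - p₂ ≥ 0`, `-p_{i-1} + 2p_i - p_{i+1} ≥ 0` for `2 ≤ i ≤ n-1`, and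
`-p_{n-1} + p_n ≥ 0`) one has
`(1/(4n-2))·(2Σ_{i<n} p_i² + p_n² - 2Σ_{i<n} p_i p_{i+1} + 2Σ_{i<n} p_i + p_n) ≥ n/(2n-1)`,
with equality for `p₁ = ⋯ = p_n = 1`.  Hence the first positive eigenvalue of
the Laplacian of `SO(2n+1)/Tⁿ` is `μ₁ = n/(2n-1)`. -/
theorem SO_odd_first_eigenvalue (n : ℕ) (hn : 2 ≤ n) :
    (∀ p : ℕ → ℤ, (∀ i, 1 ≤ i → i ≤ n → 1 ≤ p i) →
      0 ≤ 2 * p 1 - p 2 →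
      (∀ i, 2 ≤ i → i ≤ n - 1 → 0 ≤ -p (i - 1) + 2 * p i - p (i + 1)) →
      0 ≤ -p (n - 1) + p n →
      (n : ℝ) / (2 * n - 1) ≤ (1 / (4 * (n : ℝ) - 2)) *
        (2 * ∑ i ∈ Finset.Icc 1 (n - 1), (p i : ℝ) ^ 2 + (p n : ℝ) ^ 2
          - 2 * ∑ i ∈ Finset.Icc 1 (n - 1), (p i : ℝ) * (p (i + 1) : ℝ)
          + 2 * ∑ i ∈ Finset.Icc 1 (n - 1), (p i : ℝ) + (p n : ℝ))) ∧
    (1 / (4 * (n : ℝ) - 2)) *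
        (2 * ∑ _i ∈ Finset.Icc 1 (n - 1), (1 : ℝ) ^ 2 + (1 : ℝ) ^ 2
          - 2 * ∑ _i ∈ Finset.Icc 1 (n - 1), (1 : ℝ) * 1
          + 2 * ∑ _i ∈ Finset.Icc 1 (n - 1), (1 : ℝ) + 1) = (n : ℝ) / (2 * n - 1) := by
  have hn' : 1 ≤ n := by omega
  have hnR : (2 : ℝ) ≤ n := by exact_mod_cast hn
  have hμ : (n : ℝ) / (2 * n - 1) = 1 / (4 * n - 2) * (2 * n) := by
    rw [one_div_mul_eq_div, show (4 * n - 2 : ℝ) = 2 * (2 * n - 1) by ring,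
      mul_div_mul_left _ _ two_ne_zero]
  refine ⟨fun p hp _ _ _ => ?_, ?_⟩
  · rw [hμ]
    gcongr 1 / (4 * (n : ℝ) - 2) * ?_
    · exact div_nonneg zero_le_one (by linarith)
    · exact two_mul_le_yamaguchiQuadratic hn' fun i h1 h2 => by exact_mod_cast hp i h1 h2
  · rw [hμ]
    exact congrArg _ (yamaguchiQuadratic_one hn')
end
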